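/- arXiv:math/0608310 — 4 statements merged into one kernel-verified Lean document; each statement's English description precedes it below -/
import Mathlib

section
/- If f: [0,1) → ℝ is Lebesgue measurable and f(α) = f(β) whenever α and β lie in the same coset of ℚ (i.e., α - β ∈ ℚ), then there is a Borel set of full Lebesgue measure on which f is constant. -/
open MeasureTheory Set

set_option maxHeartbeats 1000000 in
/-- If `f : [0,1) → ℝ` is Lebesgue measurable and `f α = f β` whenever `α - β ∈ ℚ`,
then there is a Borel set of full Lebesgue measure in `[0,1)` on which `f` is constant. -/
theorem stmt0 (f : ℝ → ℝ)
    (hf : AEMeasurable f (volume.restrict (Ico (0:ℝ) 1)))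
    (hinv : ∀ α ∈ Ico (0:ℝ) 1, ∀ β ∈ Ico (0:ℝ) 1,
      (∃ q : ℚ, α - β = (q : ℝ)) → f α = f β) :
    ∃ S : Set ℝ, MeasurableSet S ∧ S ⊆ Ico (0:ℝ) 1 ∧ volume S = 1 ∧
      ∃ c : ℝ, ∀ x ∈ S, f x = c := by
  open Filter Pointwise in
  haveI : Fact ((0:ℝ) < 1) := ⟨zero_lt_one⟩
  let e : AddCircle (1:ℝ) → ℝ := fun x => ((AddCircle.equivIco 1 0 x : ℝ))
  have he_mem : ∀ x, e x ∈ Ico (0:ℝ) 1 := by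
    intro x; have := (AddCircle.equivIco 1 0 x).2; simpa using this
  have he_fract : ∀ t : ℝ, e (↑t) = Int.fract t := by
    intro t; simp [e, AddCircle.coe_equivIco_mk_apply]
  have he_meas : Measurable e :=
    measurable_subtype_coe.comp (AddCircle.measurableEquivIco (T := 1) 0).measurable
  have hmk : MeasurePreserving ((↑) : ℝ → AddCircle (1:ℝ))
      (volume.restrict (Ioc (0:ℝ) 1)) volume := by
    simpa using AddCircle.measurePreserving_mk 1 0
  have hIcoIoc : (volume.restrict (Ico (0:ℝ) 1)) = volume.restrict (Ioc (0:ℝ) 1) :=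
    Measure.restrict_congr_set (Ico_ae_eq_Icc.trans Ioc_ae_eq_Icc.symm)
  -- map e volume = restrict Ico
  have hmap : Measure.map e volume = volume.restrict (Ico (0:ℝ) 1) := by
    rw [← hmk.map_eq, Measure.map_map he_meas hmk.measurable]
    have h0 : (volume.restrict (Ioc (0:ℝ) 1)) {(1:ℝ)} = 0 := by
      rw [Measure.restrict_apply (measurableSet_singleton _)]
      exact measure_mono_null inter_subset_left (measure_singleton _)
    have h1 : (e ∘ ((↑) : ℝ → AddCircle (1:ℝ)))
        =ᵐ[volume.restrict (Ioc (0:ℝ) 1)] id := by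
      have hne : ∀ᵐ t ∂(volume.restrict (Ioc (0:ℝ) 1)), t ∉ ({1} : Set ℝ) :=
        measure_eq_zero_iff_ae_notMem.mp h0
      filter_upwards [hne, ae_restrict_mem measurableSet_Ioc] with t ht1 ht2
      have htIco : t ∈ Ico (0:ℝ) 1 :=
        ⟨ht2.1.le, lt_of_le_of_ne ht2.2 (by simpa using ht1)⟩
      simp only [Function.comp_apply, id_eq]
      rw [he_fract, Int.fract_eq_self.mpr htIco]
    rw [Measure.map_congr h1, Measure.map_id, hIcoIoc]
  have hg : AEMeasurable (f ∘ e) volume :=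
    (hmap ▸ hf).comp_aemeasurable he_meas.aemeasurable
  -- invariance under rational rotation
  have hg_inv : ∀ (z : AddCircle (1:ℝ)) (q : ℚ),
      f (e (z + (((q:ℝ)) : AddCircle (1:ℝ)))) = f (e z) := by
    intro z q
    obtain ⟨t, rfl⟩ := QuotientAddGroup.mk_surjective z
    have h1 : ((t : AddCircle (1:ℝ)) + (((q:ℝ)) : AddCircle (1:ℝ))) = ((t + (q:ℝ) : ℝ) : AddCircle (1:ℝ)) := by
      norm_cast
    apply hinv _ (he_mem _) _ (he_mem _)
    rw [h1, he_fract, he_fract]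
    refine ⟨q + ((⌊t⌋ - ⌊t + (q:ℝ)⌋ : ℤ) : ℚ), ?_⟩
    push_cast [Int.fract]
    ring
  -- zero-one law
  have key : ∀ a : ℝ, volume ((f ∘ e) ⁻¹' (Iic a)) = 0 ∨ volume ((f ∘ e) ⁻¹' (Iic a)) = 1 := by
    intro a
    have hs : NullMeasurableSet ((f ∘ e) ⁻¹' (Iic a)) volume :=
      hg.nullMeasurable measurableSet_Iic
    have hinv' : ∀ n : ℕ, ((((((1/(n+1) : ℚ)):ℝ) : AddCircle (1:ℝ))) +ᵥ ((f ∘ e) ⁻¹' (Iic a)))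
        =ᵐ[volume] ((f ∘ e) ⁻¹' (Iic a)) := by
      intro n
      have hseq : ((((((1/(n+1) : ℚ)):ℝ) : AddCircle (1:ℝ))) +ᵥ ((f ∘ e) ⁻¹' (Iic a)))
          = ((f ∘ e) ⁻¹' (Iic a)) := by
        ext y
        rw [Set.mem_vadd_set_iff_neg_vadd_mem]
        simp only [mem_preimage, Function.comp_apply, mem_Iic]
        have harg : -((((1/(n+1) : ℚ)):ℝ) : AddCircle (1:ℝ)) +ᵥ y
            = y + ((Rat.cast (-(1/(n+1) : ℚ)) : ℝ) : AddCircle (1:ℝ)) := by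
          rw [vadd_eq_add, add_comm]
          congr 1
          push_cast
          rfl
        rw [harg, hg_inv y (-(1/(n+1) : ℚ))]
      exact Filter.EventuallyEq.of_eq (by rw [hseq])
    have hord : Tendsto (addOrderOf ∘ fun n : ℕ => ((((1/(n+1) : ℚ)):ℝ) : AddCircle (1:ℝ)))
        atTop atTop := by
      have : (addOrderOf ∘ fun n : ℕ => ((((1/(n+1) : ℚ)):ℝ) : AddCircle (1:ℝ)))
          = fun n : ℕ => n + 1 := by
        funext n
        simp only [Function.comp_apply]
        have hcast : ((((1/(n+1) : ℚ)):ℝ)) = (1 : ℝ) / ((n+1 : ℕ) : ℝ) := by push_cast; ring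
        rw [hcast]
        exact AddCircle.addOrderOf_period_div (Nat.succ_pos n)
      rw [this]
      exact tendsto_add_atTop_nat 1
    have h01 := AddCircle.ae_empty_or_univ_of_forall_vadd_ae_eq_self hs hinv' hord
    rcases h01 with h | h
    · exact Or.inl (ae_eq_empty.mp h)
    · right
      rw [measure_congr h]
      simp [AddCircle.measure_univ]
  have huniv : volume (univ : Set (AddCircle (1:ℝ))) = 1 := by
    simp [AddCircle.measure_univ]
  have hmono : ∀ a b : ℝ, a ≤ b →
      volume ((f ∘ e) ⁻¹' (Iic a)) ≤ volume ((f ∘ e) ⁻¹' (Iic b)) :=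
    fun a b hab => measure_mono (preimage_mono (Iic_subset_Iic.mpr hab))
  have hle1 : ∀ a : ℝ, volume ((f ∘ e) ⁻¹' (Iic a)) ≤ 1 := by
    intro a; rw [← huniv]; exact measure_mono (subset_univ _)
  set A : Set ℝ := {a : ℝ | volume ((f ∘ e) ⁻¹' (Iic a)) = 1} with hA
  have hA_up : ∀ a ∈ A, ∀ b, a ≤ b → b ∈ A := by
    intro a ha b hab
    have h1 := hmono a b hab
    rw [mem_setOf_eq] at ha ⊢
    rw [ha] at h1
    exact le_antisymm (hle1 b) h1
  have hAne : A.Nonempty := by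
    by_contra h
    rw [not_nonempty_iff_eq_empty] at h
    have h0 : ∀ n : ℕ, volume ((f ∘ e) ⁻¹' (Iic (n:ℝ))) = 0 := by
      intro n
      rcases key (n:ℝ) with h' | h'
      · exact h'
      · have hm : (n:ℝ) ∈ A := h'
        rw [h] at hm
        exact absurd hm (notMem_empty _)
    have hU : (⋃ n : ℕ, (f ∘ e) ⁻¹' (Iic (n:ℝ))) = univ := by
      ext x
      simp only [mem_iUnion, mem_univ, iff_true, mem_preimage, Function.comp_apply, mem_Iic]
      exact exists_nat_ge (f (e x))
    have h1 := measure_iUnion_null h0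
    rw [hU, huniv] at h1
    exact one_ne_zero h1
  have hAbd : BddBelow A := by
    obtain ⟨m, hm⟩ : ∃ m : ℕ, volume ((f ∘ e) ⁻¹' (Iic (-(m:ℝ)))) = 0 := by
      by_contra h
      push_neg at h
      have h1 : ∀ m : ℕ, volume ((f ∘ e) ⁻¹' (Iic (-(m:ℝ)))) = 1 :=
        fun m => (key _).resolve_left (h m)
      have hcompl : ∀ m : ℕ, volume (((f ∘ e) ⁻¹' (Iic (-(m:ℝ))))ᶜ) = 0 := by
        intro m
        rw [measure_compl₀ (hg.nullMeasurable measurableSet_Iic)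
          (by rw [h1 m]; exact ENNReal.one_ne_top), huniv, h1 m, tsub_self]
      have hIU : (⋂ m : ℕ, (f ∘ e) ⁻¹' (Iic (-(m:ℝ)))) = ∅ := by
        ext x
        simp only [mem_iInter, mem_empty_iff_false, iff_false, not_forall, mem_preimage,
          Function.comp_apply, mem_Iic, not_le]
        obtain ⟨m, hm⟩ := exists_nat_gt (-(f (e x)))
        exact ⟨m, by linarith⟩
      have h2 := measure_iUnion_null hcompl
      rw [← compl_iInter, hIU, compl_empty, huniv] at h2
      exact one_ne_zero h2
    refine ⟨-(m:ℝ), fun a ha => ?_⟩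
    by_contra hlt
    push_neg at hlt
    have h1 := hmono a (-(m:ℝ)) hlt.le
    rw [mem_setOf_eq] at ha
    rw [ha, hm] at h1
    exact one_ne_zero (le_antisymm h1 zero_le)
  set c := sInf A with hc
  have hlow : volume {x : AddCircle (1:ℝ) | f (e x) < c} = 0 := by
    have hsub : {x : AddCircle (1:ℝ) | f (e x) < c} ⊆
        ⋃ q : ℚ, {x : AddCircle (1:ℝ) | f (e x) ≤ (q:ℝ) ∧ (q:ℝ) < c} := by
      intro x hx
      obtain ⟨q, hq1, hq2⟩ := exists_rat_btwn (mem_setOf_eq ▸ hx)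
      exact mem_iUnion.mpr ⟨q, hq1.le, hq2⟩
    refine measure_mono_null hsub (measure_iUnion_null fun q => ?_)
    by_cases hq : (q:ℝ) < c
    · have hq0 : volume ((f ∘ e) ⁻¹' (Iic (q:ℝ))) = 0 := by
        rcases key (q:ℝ) with h' | h'
        · exact h'
        · exact absurd (csInf_le hAbd h') (not_le.mpr hq)
      exact measure_mono_null (fun x hx => hx.1) hq0
    · have hempty : {x : AddCircle (1:ℝ) | f (e x) ≤ (q:ℝ) ∧ (q:ℝ) < c} = ∅ := by
        ext x
        simp only [mem_setOf_eq, mem_empty_iff_false, iff_false]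
        tauto
      simp [hempty]
  have hhigh : volume {x : AddCircle (1:ℝ) | c < f (e x)} = 0 := by
    have hsub : {x : AddCircle (1:ℝ) | c < f (e x)} ⊆
        ⋃ q : ℚ, {x : AddCircle (1:ℝ) | (q:ℝ) < f (e x) ∧ c < (q:ℝ)} := by
      intro x hx
      obtain ⟨q, hq1, hq2⟩ := exists_rat_btwn (mem_setOf_eq ▸ hx)
      exact mem_iUnion.mpr ⟨q, hq2, hq1⟩
    refine measure_mono_null hsub (measure_iUnion_null fun q => ?_)
    by_cases hq : c < (q:ℝ)
    · obtain ⟨a, haA, haq⟩ := exists_lt_of_csInf_lt hAne hq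
      have hqA : (q:ℝ) ∈ A := hA_up a haA _ haq.le
      rw [mem_setOf_eq] at hqA
      have hq0 : volume (((f ∘ e) ⁻¹' (Iic (q:ℝ)))ᶜ) = 0 := by
        rw [measure_compl₀ (hg.nullMeasurable measurableSet_Iic)
          (by rw [hqA]; exact ENNReal.one_ne_top), huniv, hqA, tsub_self]
      refine measure_mono_null (fun x hx => ?_) hq0
      simp only [mem_compl_iff, mem_preimage, Function.comp_apply, mem_Iic, not_le]
      exact hx.1
    · have hempty : {x : AddCircle (1:ℝ) | (q:ℝ) < f (e x) ∧ c < (q:ℝ)} = ∅ := by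
        ext x
        simp only [mem_setOf_eq, mem_empty_iff_false, iff_false]
        tauto
      simp [hempty]
  have hN : volume {x : AddCircle (1:ℝ) | f (e x) ≠ c} = 0 := by
    refine measure_mono_null (fun x hx => ?_) (measure_union_null hlow hhigh)
    rcases lt_or_gt_of_ne hx with h | h
    · exact Or.inl h
    · exact Or.inr h
  obtain ⟨B, hBsub, hBmeas, hB0⟩ := exists_measurable_superset_of_null hN
  refine ⟨Ico (0:ℝ) 1 \ (((↑) : ℝ → AddCircle (1:ℝ)) ⁻¹' B),
    measurableSet_Ico.diff (hBmeas.preimage AddCircle.measurable_mk'), diff_subset, ?_, c, ?_⟩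
  · have hpre : volume (Ico (0:ℝ) 1 ∩ (((↑) : ℝ → AddCircle (1:ℝ)) ⁻¹' B)) = 0 := by
      have h1 := hmk.measure_preimage hBmeas.nullMeasurableSet
      rw [hB0] at h1
      rw [inter_comm, ← Measure.restrict_apply (hBmeas.preimage AddCircle.measurable_mk'),
        hIcoIoc]
      exact h1
    rw [measure_diff_null' hpre]
    simp [Real.volume_Ico]
  · intro x hx
    have hxc : f (e ((x : ℝ) : AddCircle (1:ℝ))) = c := by
      by_contra hne
      exact hx.2 (hBsub hne)
    rwa [he_fract, Int.fract_eq_self.mpr hx.1] at hxc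
end

section
/- Let f_n : X × Y → ℝ be measurable functions on a product of probability spaces such that for μ-almost every x, the sequence f_n(x, ·) converges in probability (with respect to ν) to a constant c(x). Then the function (x,y) ↦ c(x) is measurable with respect to the completion of the product σ-algebra, and in particular c is measurable. -/
open MeasureTheory Filter

lemma lipschitz_arctan : LipschitzWith 1 Real.arctan := by
  apply lipschitzWith_of_nnnorm_deriv_le Real.differentiable_arctan
  intro x
  rw [Real.deriv_arctan]
  have h1 : (0:ℝ) < 1 + x ^ 2 := by positivity
  have : ‖(1 : ℝ) / (1 + x ^ 2)‖ ≤ (1 : ℝ) := by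
    rw [Real.norm_eq_abs, abs_of_pos (by positivity)]
    rw [div_le_one h1]
    nlinarith [sq_nonneg x]
  exact_mod_cast this

lemma measurable_tan' : Measurable Real.tan := by
  have : Real.tan = fun x => Real.sin x / Real.cos x := by
    funext x; exact Real.tan_eq_sin_div_cos x
  rw [this]
  exact Real.measurable_sin.div Real.measurable_cos

lemma abs_arctan_le (x : ℝ) : |Real.arctan x| ≤ Real.pi / 2 :=
  le_of_lt (by
    rw [abs_lt]
    exact ⟨Real.neg_pi_div_two_lt_arctan x, Real.arctan_lt_pi_div_two x⟩)

/-- If `fₙ : X × Y → ℝ` are measurable on a product of probability spaces and for μ-a.e. `x`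
the sequence `fₙ(x,·)` converges in probability (w.r.t. ν) to a constant `c x`, then
`(x,y) ↦ c x` is measurable w.r.t. the completion of the product σ-algebra (i.e. a.e.
measurable for the product measure), and in particular `c` is (μ-a.e.) measurable. -/
theorem stmt1 {X Y : Type*} [MeasurableSpace X] [MeasurableSpace Y]
    (μ : Measure X) (ν : Measure Y) [IsProbabilityMeasure μ] [IsProbabilityMeasure ν]
    (f : ℕ → X × Y → ℝ) (hf : ∀ n, Measurable (f n)) (c : X → ℝ)
    (hconv : ∀ᵐ x ∂μ, ∀ ε > (0:ℝ),
      Tendsto (fun n => ν {y | ε < |f n (x, y) - c x|}) atTop (nhds 0)) :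
    AEMeasurable (fun p : X × Y => c p.1) (μ.prod ν) ∧ AEMeasurable c μ := by
  -- the averaged, truncated functions
  set F : ℕ → X → ℝ := fun n x => ∫ y, Real.arctan (f n (x, y)) ∂ν with hFdef
  have hFmeas : ∀ n, Measurable (F n) := by
    intro n
    exact ((hf n).arctan.stronglyMeasurable.integral_prod_right').measurable
  -- fibrewise integrability of the truncated functions
  have hInt : ∀ n x, Integrable (fun y => Real.arctan (f n (x, y))) ν := by
    intro n x
    refine ⟨(((hf n).comp measurable_prodMk_left).arctan).aestronglyMeasurable, ?_⟩
    refine HasFiniteIntegral.of_bounded (C := Real.pi / 2) ?_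
    exact Filter.Eventually.of_forall fun y => by
      simpa [Real.norm_eq_abs] using abs_arctan_le (f n (x, y))
  -- key convergence
  have key : ∀ᵐ x ∂μ, Tendsto (fun n => F n x) atTop (nhds (Real.arctan (c x))) := by
    filter_upwards [hconv] with x hx
    rw [Metric.tendsto_atTop]
    intro ε hε
    set δ : ℝ := min (ε / 2) 1 with hδdef
    have hδpos : 0 < δ := lt_min (by linarith) one_pos
    have hδle : δ ≤ ε / 2 := min_le_left _ _
    -- the measures of the bad sets tend to 0
    have h1 := hx δ hδpos
    have h2 : Tendsto (fun n => (ν {y | δ < |f n (x, y) - c x|}).toReal) atTop (nhds 0) := by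
      have := (ENNReal.tendsto_toReal (by norm_num : (0:ENNReal) ≠ ⊤)).comp h1
      simpa [Function.comp_def] using this
    have hπ : (0:ℝ) < Real.pi := Real.pi_pos
    have h3 : Tendsto (fun n => Real.pi * (ν {y | δ < |f n (x, y) - c x|}).toReal)
        atTop (nhds 0) := by
      have := h2.const_mul Real.pi
      simpa using this
    have h4 : ∀ᶠ n in atTop,
        Real.pi * (ν {y | δ < |f n (x, y) - c x|}).toReal < ε / 2 - δ + ε / 4 := by
      have hpos : (0:ℝ) < ε / 2 - δ + ε / 4 := by
        have : δ ≤ ε / 2 := hδle; linarith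
      exact (h3.eventually (eventually_lt_nhds hpos))
    obtain ⟨N, hN⟩ := eventually_atTop.mp h4
    refine ⟨N, fun n hn' => ?_⟩
    have hn := hN n hn'
    -- the bad set
    set A : Set Y := {y | δ < |f n (x, y) - c x|} with hAdef
    have hAmeas : MeasurableSet A := by
      have : Measurable fun y => |f n (x, y) - c x| :=
        (((hf n).comp measurable_prodMk_left).sub measurable_const).abs
      exact measurableSet_lt measurable_const this
    have hνA : ν A ≠ ⊤ := (measure_lt_top ν A).ne
    -- bound |F n x - arctan (c x)|
    have hsub : F n x - Real.arctan (c x)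
        = ∫ y, (Real.arctan (f n (x, y)) - Real.arctan (c x)) ∂ν := by
      rw [integral_sub (hInt n x) (integrable_const _)]
      simp [hFdef]
    have hptwise : ∀ y, |Real.arctan (f n (x, y)) - Real.arctan (c x)|
        ≤ δ + A.indicator (fun _ => Real.pi) y := by
      intro y
      by_cases hy : y ∈ A
      · rw [Set.indicator_of_mem hy]
        have h5 := abs_arctan_le (f n (x, y))
        have h6 := abs_arctan_le (c x)
        have := abs_sub (Real.arctan (f n (x, y))) (Real.arctan (c x))
        nlinarith [hδpos]
      · rw [Set.indicator_of_notMem hy, add_zero]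
        have hy' : |f n (x, y) - c x| ≤ δ := le_of_not_gt hy
        have h7 := lipschitz_arctan.dist_le_mul (f n (x, y)) (c x)
        rw [Real.dist_eq, Real.dist_eq] at h7
        push_cast at h7
        rw [one_mul] at h7
        exact h7.trans hy'
    have hIntRHS : Integrable (fun y => δ + A.indicator (fun _ => Real.pi) y) ν :=
      (integrable_const δ).add ((integrable_const Real.pi).indicator hAmeas)
    have hbound : |F n x - Real.arctan (c x)| ≤ δ + Real.pi * (ν A).toReal := by
      rw [hsub]
      calc |∫ y, (Real.arctan (f n (x, y)) - Real.arctan (c x)) ∂ν|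
          ≤ ∫ y, |Real.arctan (f n (x, y)) - Real.arctan (c x)| ∂ν := by
            simpa [Real.norm_eq_abs] using
              norm_integral_le_integral_norm
                (fun y => Real.arctan (f n (x, y)) - Real.arctan (c x)) (μ := ν)
        _ ≤ ∫ y, (δ + A.indicator (fun _ => Real.pi) y) ∂ν := by
            refine integral_mono (((hInt n x).sub (integrable_const _)).abs) hIntRHS ?_
            exact hptwise
        _ = δ + Real.pi * (ν A).toReal := by
            rw [integral_add (integrable_const δ)
              ((integrable_const Real.pi).indicator hAmeas)]
            rw [integral_indicator_const _ hAmeas]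
            simp [mul_comm, measureReal_def]
    rw [Real.dist_eq]
    calc |F n x - Real.arctan (c x)| ≤ δ + Real.pi * (ν A).toReal := hbound
      _ < δ + (ε / 2 - δ + ε / 4) := by linarith [hn]
      _ < ε := by linarith
  -- the limsup is measurable
  set L : X → ℝ := fun x => limsup (fun n => F n x) atTop with hLdef
  have hLmeas : Measurable L := Measurable.limsup hFmeas
  have hceq : c =ᵐ[μ] fun x => Real.tan (L x) := by
    filter_upwards [key] with x hx
    have : L x = Real.arctan (c x) := hx.limsup_eq
    rw [this, Real.tan_arctan]
  have hcae : AEMeasurable c μ := ⟨fun x => Real.tan (L x), measurable_tan'.comp hLmeas, hceq⟩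
  refine ⟨?_, hcae⟩
  have hmap : (μ.prod ν).map Prod.fst = μ := by
    rw [Measure.map_fst_prod]; simp
  have : AEMeasurable (c ∘ Prod.fst) (μ.prod ν) := by
    refine AEMeasurable.comp_measurable ?_ measurable_fst
    rw [hmap]; exact hcae
  exact this
end

section
/- (Convergence of perturbed partitions, Lemma on approximation) Let (P_k) be a sequence of ordered partitions of a probability space X (into a fixed number of sets) with ρ(P_{k-1}, P_k) < ε(k), and let Q be a partition with each cell of Q approximable within ε(k) by the algebra generated by {T^j P_k : |j| ≤ N(k)}, where Σ_k ε(k) < ∞ and N(k)·Σ_{j>k} ε(j) → 0. Then P_k converges in the ρ metric to a partition P, and every cell of Q lies (mod μ) in the σ-algebra ⋁_{j=-∞}^{∞} T^{-j} P. -/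
open MeasureTheory Set Filter
open scoped ENNReal symmDiff

/-- The `m`-th power (for `m : ℤ`) of an invertible transformation `T`. -/
def itZ {X : Type*} [MeasurableSpace X] (T : X ≃ᵐ X) (m : ℤ) : X → X :=
  if 0 ≤ m then (⇑T)^[m.toNat] else (⇑T.symm)^[(-m).toNat]

lemma itZ_measurePreserving {X : Type*} [MeasurableSpace X] {μ : Measure X}
    {T : X ≃ᵐ X} (hT : MeasurePreserving T μ μ) (l : ℤ) :
    MeasurePreserving (itZ T l) μ μ := by
  unfold itZ
  split
  · exact hT.iterate _
  · exact (MeasurePreserving.symm T hT).iterate _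

/-- Generic replacement lemma: if every generator of `S` can be approximated (within the
fixed "bad set" `D`) by a set measurable w.r.t. `generateFrom S'`, then so can every set
measurable w.r.t. `generateFrom S`. -/
lemma replace_lemma {X : Type*} (S S' : Set (Set X)) (D : Set X)
    (h : ∀ t ∈ S, ∃ t', MeasurableSet[MeasurableSpace.generateFrom S'] t' ∧ symmDiff t t' ⊆ D) :
    ∀ C, MeasurableSet[MeasurableSpace.generateFrom S] C →
      ∃ C', MeasurableSet[MeasurableSpace.generateFrom S'] C' ∧ symmDiff C C' ⊆ D := by
  intro C hC
  refine MeasurableSpace.generateFrom_induction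
    (p := fun C _ => ∃ C', MeasurableSet[MeasurableSpace.generateFrom S'] C' ∧ symmDiff C C' ⊆ D)
    (C := S) (fun t ht _ => h t ht)
    ⟨∅, @MeasurableSet.empty _ (MeasurableSpace.generateFrom S'), by simp⟩ ?_ ?_ C hC
  · rintro t ht ⟨t', ht', hsub⟩
    exact ⟨t'ᶜ, ht'.compl, by rwa [compl_symmDiff_compl]⟩
  · intro s hs hind
    choose s' hs' hsub using hind
    refine ⟨⋃ i, s' i, MeasurableSet.iUnion hs', ?_⟩
    intro x hx
    rw [Set.mem_symmDiff] at hx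
    rcases hx with ⟨hx1, hx2⟩ | ⟨hx1, hx2⟩
    · obtain ⟨i, hi⟩ := mem_iUnion.1 hx1
      exact hsub i (Set.mem_symmDiff.2 (Or.inl ⟨hi, fun h => hx2 (mem_iUnion.2 ⟨i, h⟩)⟩))
    · obtain ⟨i, hi⟩ := mem_iUnion.1 hx1
      exact hsub i (Set.mem_symmDiff.2 (Or.inr ⟨hi, fun h => hx2 (mem_iUnion.2 ⟨i, h⟩)⟩))

/-- Approximation lemma: if `ρ(P_{k-1},P_k) < ε(k)`, each cell of `Q` is `ε(k)`-approximable
by the algebra generated by `{T^j P_k : |j| ≤ N(k)}`, `∑ ε(k) < ∞` and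
`N(k)·∑_{j>k} ε(j) → 0`, then `P_k` converges in `ρ` to a partition `P` and every cell of
`Q` lies mod `μ` in `⋁_{j=-∞}^{∞} T^{-j} P`. -/
theorem stmt10 {X : Type*} [MeasurableSpace X] (μ : Measure X) [IsProbabilityMeasure μ]
    (T : X ≃ᵐ X) (hT : MeasurePreserving T μ μ)
    {n m : ℕ} (P : ℕ → Fin n → Set X) (Q : Fin m → Set X)
    (ε : ℕ → ℝ) (N : ℕ → ℕ)
    (hPm : ∀ k i, MeasurableSet (P k i))
    (hPd : ∀ k, Pairwise (Function.onFun Disjoint (P k)))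
    (hPu : ∀ k, ⋃ i, P k i = univ)
    (hQm : ∀ j, MeasurableSet (Q j))
    (hQd : Pairwise (Function.onFun Disjoint Q)) (hQu : ⋃ j, Q j = univ)
    (hεpos : ∀ k, 0 < ε k)
    (hρ : ∀ k : ℕ, 1 ≤ k → ∑ i, (μ (symmDiff (P (k - 1) i) (P k i))).toReal < ε k)
    (happrox : ∀ k : ℕ, ∀ j : Fin m,
      ∃ C : Set X,
        MeasurableSet[MeasurableSpace.generateFrom
          {s : Set X | ∃ (i : Fin n) (l : ℤ), |l| ≤ (N k : ℤ) ∧ s = itZ T l ⁻¹' P k i}] C ∧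
        (μ (symmDiff (Q j) C)).toReal < ε k)
    (hsum : Summable ε)
    (htail : Tendsto (fun k : ℕ => (N k : ℝ) * ∑' j : ℕ, ε (k + 1 + j)) atTop (nhds 0)) :
    ∃ Plim : Fin n → Set X,
      (∀ i, MeasurableSet (Plim i)) ∧
      Pairwise (fun i j => μ (Plim i ∩ Plim j) = 0) ∧
      μ (⋃ i, Plim i)ᶜ = 0 ∧
      Tendsto (fun k => ∑ i, (μ (symmDiff (P k i) (Plim i))).toReal) atTop (nhds 0) ∧
      ∀ j : Fin m, ∃ C : Set X,
        MeasurableSet[MeasurableSpace.generateFrom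
          {s : Set X | ∃ (i : Fin n) (l : ℤ), s = itZ T l ⁻¹' Plim i}] C ∧
        μ (symmDiff (Q j) C) = 0 := by
  classical
  -- the tail of the series
  set δ : ℕ → ℝ := fun k => ∑' t, ε (k + 1 + t) with hδdef
  have hδ0 : ∀ k, 0 ≤ δ k := fun k => tsum_nonneg fun t => (hεpos _).le
  have hδto : Tendsto δ atTop (nhds 0) := by
    have h1 : Tendsto (fun i : ℕ => ∑' t, ε (t + i)) atTop (nhds 0) := tendsto_sum_nat_add ε
    have h2 := h1.comp (tendsto_add_atTop_nat 1)
    refine h2.congr fun k => ?_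
    exact tsum_congr fun t => congrArg ε (by show t + (k + 1) = k + 1 + t; omega)
  -- the limit partition
  set Plim : Fin n → Set X := fun i => ⋃ K, ⋂ k, ⋂ (_ : K ≤ k), P k i with hPlimdef
  have hPlm : ∀ i, MeasurableSet (Plim i) := fun i =>
    MeasurableSet.iUnion fun K => MeasurableSet.iInter fun k => MeasurableSet.iInter fun _ =>
      hPm k i
  have hmem : ∀ i x, x ∈ Plim i ↔ ∃ K, ∀ k, K ≤ k → x ∈ P k i := by
    intro i x
    simp [hPlimdef, mem_iUnion, mem_iInter]
  -- inclusion of symmetric differences in the union of consecutive differences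
  have hincl : ∀ k i, symmDiff (P k i) (Plim i) ⊆
      ⋃ t, symmDiff (P (k + t) i) (P (k + t + 1) i) := by
    intro k i x hx
    rw [Set.mem_symmDiff] at hx
    rcases hx with ⟨hxP, hxL⟩ | ⟨hxL, hxP⟩
    · have hex : ∃ t, x ∉ P (k + t) i := by
        by_contra h
        push_neg at h
        refine hxL ((hmem i x).2 ⟨k, fun k' hk' => ?_⟩)
        have := h (k' - k)
        rwa [Nat.add_sub_cancel' hk'] at this
      set t0 := Nat.find hex with ht0def
      have hspec : x ∉ P (k + t0) i := Nat.find_spec hex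
      have ht0pos : t0 ≠ 0 := by
        intro h
        rw [h] at hspec
        exact hspec hxP
      have hprev : x ∈ P (k + (t0 - 1)) i := by
        by_contra h
        exact (Nat.find_min hex (show t0 - 1 < t0 by omega)) h
      refine mem_iUnion.2 ⟨t0 - 1, Set.mem_symmDiff.2 (Or.inl ⟨hprev, ?_⟩)⟩
      have : k + (t0 - 1) + 1 = k + t0 := by omega
      rw [this]
      exact hspec
    · obtain ⟨K, hK⟩ := (hmem i x).1 hxL
      have hex : ∃ t, x ∈ P (k + t) i := ⟨K, hK _ (Nat.le_add_left K k)⟩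
      set t0 := Nat.find hex with ht0def
      have hspec : x ∈ P (k + t0) i := Nat.find_spec hex
      have ht0pos : t0 ≠ 0 := by
        intro h
        rw [h] at hspec
        exact hxP hspec
      have hprev : x ∉ P (k + (t0 - 1)) i :=
        Nat.find_min hex (show t0 - 1 < t0 by omega)
      refine mem_iUnion.2 ⟨t0 - 1, Set.mem_symmDiff.2 (Or.inr ⟨?_, hprev⟩)⟩
      have : k + (t0 - 1) + 1 = k + t0 := by omega
      rw [this]
      exact hspec
  -- step bound from hρ
  have hstep : ∀ t, ∑ i, μ (symmDiff (P t i) (P (t + 1) i)) ≤ ENNReal.ofReal (ε (t + 1)) := by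
    intro t
    have h1 := hρ (t + 1) (by omega)
    simp only [Nat.add_sub_cancel] at h1
    have hne : (∑ i, μ (symmDiff (P t i) (P (t + 1) i))) ≠ ⊤ :=
      (ENNReal.sum_lt_top.2 fun a _ => measure_lt_top μ _).ne
    rw [← ENNReal.ofReal_toReal hne, ENNReal.toReal_sum (fun a _ => measure_ne_top μ _)]
    exact ENNReal.ofReal_le_ofReal h1.le
  -- main quantitative bound
  have hsumb : ∀ k, ∑ i, μ (symmDiff (P k i) (Plim i)) ≤ ENNReal.ofReal (δ k) := by
    intro k
    have hsummtail : Summable fun t => ε (k + 1 + t) :=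
      ((summable_nat_add_iff (k + 1)).2 hsum).congr fun t => congrArg ε (by omega)
    calc ∑ i, μ (symmDiff (P k i) (Plim i))
        ≤ ∑ i, ∑' t, μ (symmDiff (P (k + t) i) (P (k + t + 1) i)) :=
          Finset.sum_le_sum fun i _ =>
            (measure_mono (hincl k i)).trans (measure_iUnion_le _)
      _ = ∑' t, ∑ i, μ (symmDiff (P (k + t) i) (P (k + t + 1) i)) :=
          (Summable.tsum_finsetSum fun i _ => ENNReal.summable).symm
      _ ≤ ∑' t, ENNReal.ofReal (ε (k + 1 + t)) := by
          refine ENNReal.tsum_le_tsum fun t => ?_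
          exact (hstep (k + t)).trans
            (le_of_eq (congrArg (fun x => ENNReal.ofReal (ε x)) (by omega)))
      _ = ENNReal.ofReal (δ k) := by
          rw [hδdef]
          exact (ENNReal.ofReal_tsum_of_nonneg (fun t => (hεpos _).le) hsummtail).symm
  have hone : ∀ k i, μ (symmDiff (P k i) (Plim i)) ≤ ENNReal.ofReal (δ k) := by
    intro k i
    refine le_trans ?_ (hsumb k)
    exact Finset.single_le_sum (f := fun i => μ (symmDiff (P k i) (Plim i)))
      (fun _ _ => zero_le) (Finset.mem_univ i)
  have hofδ : Tendsto (fun k => ENNReal.ofReal (δ k)) atTop (nhds 0) := by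
    have := (ENNReal.continuous_ofReal.tendsto 0).comp hδto
    simpa [Function.comp_def] using this
  refine ⟨Plim, hPlm, ?_, ?_, ?_, ?_⟩
  · -- pairwise a.e. disjoint
    intro i j hij
    have key : ∀ k, μ (Plim i ∩ Plim j) ≤
        ENNReal.ofReal (δ k) + ENNReal.ofReal (δ k) := by
      intro k
      have hsub : Plim i ∩ Plim j ⊆
          symmDiff (P k i) (Plim i) ∪ symmDiff (P k j) (Plim j) := by
        intro x ⟨hxi, hxj⟩
        by_cases h1 : x ∈ P k i
        · by_cases h2 : x ∈ P k j
          · exact absurd (Set.disjoint_iff_inter_eq_empty.1 (hPd k hij) ▸ ⟨h1, h2⟩)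
              (Set.notMem_empty x)
          · exact Or.inr (Set.mem_symmDiff.2 (Or.inr ⟨hxj, h2⟩))
        · exact Or.inl (Set.mem_symmDiff.2 (Or.inr ⟨hxi, h1⟩))
      calc μ (Plim i ∩ Plim j) ≤ μ (symmDiff (P k i) (Plim i) ∪ symmDiff (P k j) (Plim j)) :=
            measure_mono hsub
        _ ≤ μ (symmDiff (P k i) (Plim i)) + μ (symmDiff (P k j) (Plim j)) := measure_union_le _ _
        _ ≤ ENNReal.ofReal (δ k) + ENNReal.ofReal (δ k) := add_le_add (hone k i) (hone k j)
    have hlim : Tendsto (fun k => ENNReal.ofReal (δ k) + ENNReal.ofReal (δ k)) atTop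
        (nhds 0) := by
      have := hofδ.add hofδ
      simpa using this
    exact le_antisymm (ge_of_tendsto hlim (Eventually.of_forall key)) zero_le
  · -- union is a.e. everything
    have key : ∀ k, μ (⋃ i, Plim i)ᶜ ≤ ENNReal.ofReal (δ k) := by
      intro k
      have hsub : (⋃ i, Plim i)ᶜ ⊆ ⋃ i, symmDiff (P k i) (Plim i) := by
        intro x hx
        have : x ∈ ⋃ i, P k i := (hPu k).symm ▸ Set.mem_univ x
        obtain ⟨i, hi⟩ := mem_iUnion.1 this
        refine mem_iUnion.2 ⟨i, Set.mem_symmDiff.2 (Or.inl ⟨hi, fun h => hx (mem_iUnion.2 ⟨i, h⟩)⟩)⟩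
      calc μ (⋃ i, Plim i)ᶜ ≤ μ (⋃ i, symmDiff (P k i) (Plim i)) := measure_mono hsub
        _ ≤ ∑' i, μ (symmDiff (P k i) (Plim i)) := measure_iUnion_le _
        _ = ∑ i, μ (symmDiff (P k i) (Plim i)) := tsum_fintype _
        _ ≤ ENNReal.ofReal (δ k) := hsumb k
    exact le_antisymm (ge_of_tendsto hofδ (Eventually.of_forall key)) zero_le
  · -- convergence in ρ
    have hub : ∀ k, ∑ i, (μ (symmDiff (P k i) (Plim i))).toReal ≤ δ k := by
      intro k
      rw [← ENNReal.toReal_sum (fun a _ => measure_ne_top μ _)]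
      have := ENNReal.toReal_mono (by simp) (hsumb k)
      rwa [ENNReal.toReal_ofReal (hδ0 k)] at this
    refine squeeze_zero (fun k => Finset.sum_nonneg fun i _ => ENNReal.toReal_nonneg)
      hub hδto
  · -- approximation of Q
    intro j
    obtain hh := fun k => happrox k j
    choose Ck hCkmeas hCkapp using hh
    -- the bad set
    set D : ℕ → Set X := fun k => ⋃ (i : Fin n), ⋃ (l : ℤ), ⋃ (_ : |l| ≤ (N k : ℤ)),
      itZ T l ⁻¹' (symmDiff (P k i) (Plim i)) with hDdef
    have hDbound : ∀ k, μ (D k) ≤ ENNReal.ofReal ((2 * (N k : ℝ) + 1) * δ k) := by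
      intro k
      have hmeas : ∀ i, MeasurableSet (symmDiff (P k i) (Plim i)) :=
        fun i => (hPm k i).symmDiff (hPlm i)
      have hinner : ∀ i : Fin n, μ (⋃ (l : ℤ), ⋃ (_ : |l| ≤ (N k : ℤ)),
          itZ T l ⁻¹' (symmDiff (P k i) (Plim i))) ≤
          ENNReal.ofReal (2 * (N k : ℝ) + 1) * μ (symmDiff (P k i) (Plim i)) := by
        intro i
        have heq : (⋃ (l : ℤ), ⋃ (_ : |l| ≤ (N k : ℤ)),
            itZ T l ⁻¹' (symmDiff (P k i) (Plim i))) =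
            ⋃ l ∈ Finset.Icc (-(N k : ℤ)) (N k : ℤ),
              itZ T l ⁻¹' (symmDiff (P k i) (Plim i)) := by
          apply Set.iUnion_congr
          intro l
          simp [Finset.mem_Icc, abs_le]
        rw [heq]
        calc μ (⋃ l ∈ Finset.Icc (-(N k : ℤ)) (N k : ℤ),
              itZ T l ⁻¹' (symmDiff (P k i) (Plim i)))
            ≤ ∑ l ∈ Finset.Icc (-(N k : ℤ)) (N k : ℤ),
              μ (itZ T l ⁻¹' (symmDiff (P k i) (Plim i))) := measure_biUnion_finset_le _ _
          _ = ∑ l ∈ Finset.Icc (-(N k : ℤ)) (N k : ℤ), μ (symmDiff (P k i) (Plim i)) :=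
              Finset.sum_congr rfl fun l _ =>
                (itZ_measurePreserving hT l).measure_preimage (hmeas i).nullMeasurableSet
          _ = (Finset.Icc (-(N k : ℤ)) (N k : ℤ)).card • μ (symmDiff (P k i) (Plim i)) :=
              Finset.sum_const _
          _ = ENNReal.ofReal (2 * (N k : ℝ) + 1) * μ (symmDiff (P k i) (Plim i)) := by
              rw [Int.card_Icc, nsmul_eq_mul]
              congr 1
              have h1 : ((N k : ℤ) + 1 - -(N k : ℤ)).toNat = 2 * N k + 1 := by omega
              rw [h1, ← ENNReal.ofReal_natCast]
              congr 1
              push_cast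
              ring
      calc μ (D k) ≤ ∑ i : Fin n, μ (⋃ (l : ℤ), ⋃ (_ : |l| ≤ (N k : ℤ)),
              itZ T l ⁻¹' (symmDiff (P k i) (Plim i))) := by
            rw [hDdef]
            exact (measure_iUnion_le _).trans_eq (tsum_fintype _)
        _ ≤ ∑ i : Fin n, ENNReal.ofReal (2 * (N k : ℝ) + 1) * μ (symmDiff (P k i) (Plim i)) :=
            Finset.sum_le_sum fun i _ => hinner i
        _ = ENNReal.ofReal (2 * (N k : ℝ) + 1) * ∑ i, μ (symmDiff (P k i) (Plim i)) := by
            rw [Finset.mul_sum]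
        _ ≤ ENNReal.ofReal (2 * (N k : ℝ) + 1) * ENNReal.ofReal (δ k) :=
            mul_le_mul_right (hsumb k) _
        _ = ENNReal.ofReal ((2 * (N k : ℝ) + 1) * δ k) :=
            (ENNReal.ofReal_mul (by positivity)).symm
    -- replacement of the generators
    have hrep : ∀ k, ∃ C', MeasurableSet[MeasurableSpace.generateFrom
        {s : Set X | ∃ (i : Fin n) (l : ℤ), s = itZ T l ⁻¹' Plim i}] C' ∧
        symmDiff (Ck k) C' ⊆ D k := by
      intro k
      refine replace_lemma _ _ _ ?_ (Ck k) (hCkmeas k)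
      rintro t ⟨i, l, hl, rfl⟩
      refine ⟨itZ T l ⁻¹' Plim i, MeasurableSpace.measurableSet_generateFrom ⟨i, l, rfl⟩, ?_⟩
      rw [← Set.preimage_symmDiff]
      exact Set.subset_iUnion_of_subset i (Set.subset_iUnion_of_subset l
        (Set.subset_iUnion_of_subset hl subset_rfl))
    choose C' hC'meas hC'sub using hrep
    -- the quantitative bound on the approximation by C'
    have hb : ∀ k, μ (symmDiff (Q j) (C' k)) ≤
        ENNReal.ofReal (ε k) + ENNReal.ofReal ((2 * (N k : ℝ) + 1) * δ k) := by
      intro k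
      calc μ (symmDiff (Q j) (C' k))
          ≤ μ (symmDiff (Q j) (Ck k) ∪ symmDiff (Ck k) (C' k)) :=
            measure_mono (symmDiff_triangle _ _ _)
        _ ≤ μ (symmDiff (Q j) (Ck k)) + μ (symmDiff (Ck k) (C' k)) := measure_union_le _ _
        _ ≤ ENNReal.ofReal (ε k) + ENNReal.ofReal ((2 * (N k : ℝ) + 1) * δ k) := by
            refine add_le_add ?_ ((measure_mono (hC'sub k)).trans (hDbound k))
            rw [← ENNReal.ofReal_toReal (measure_ne_top μ _)]
            exact ENNReal.ofReal_le_ofReal (hCkapp k).le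
    -- the bound tends to zero
    have hbto : Tendsto (fun k => μ (symmDiff (Q j) (C' k))) atTop (nhds 0) := by
      have hr : Tendsto (fun k => ε k + (2 * (N k : ℝ) + 1) * δ k) atTop (nhds 0) := by
        have h1 : Tendsto ε atTop (nhds 0) := hsum.tendsto_atTop_zero
        have h2 : Tendsto (fun k => (N k : ℝ) * δ k) atTop (nhds 0) := htail
        have h3 : Tendsto (fun k => 2 * ((N k : ℝ) * δ k) + δ k) atTop (nhds 0) := by
          have := ((h2.const_mul 2).add hδto)
          simpa using this
        have := h1.add h3
        simp only [add_zero] at this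
        refine this.congr fun k => ?_
        ring
      have hg : Tendsto (fun k => ENNReal.ofReal (ε k + (2 * (N k : ℝ) + 1) * δ k))
          atTop (nhds 0) := by
        have := (ENNReal.continuous_ofReal.tendsto 0).comp hr
        simpa [Function.comp_def] using this
      refine tendsto_nhds_bot_mono' hg fun k => ?_
      refine (hb k).trans ?_
      rw [ENNReal.ofReal_add (hεpos k).le (mul_nonneg (by positivity) (hδ0 k))]
    -- choose a rapidly converging subsequence
    have hsub : ∀ t : ℕ, ∃ k, μ (symmDiff (Q j) (C' k)) < (2 : ℝ≥0∞)⁻¹ ^ t := by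
      intro t
      have hpos : (0 : ℝ≥0∞) < 2⁻¹ ^ t := by
        apply ENNReal.pow_pos
        simp
      exact (hbto.eventually_lt_const hpos).exists
    choose f hf using hsub
    set E : ℕ → Set X := fun t => C' (f t) with hEdef
    refine ⟨⋃ K, ⋂ t, ⋂ (_ : K ≤ t), E t, ?_, ?_⟩
    · exact MeasurableSet.iUnion fun K => MeasurableSet.iInter fun t =>
        MeasurableSet.iInter fun _ => hC'meas (f t)
    · -- null symmetric difference
      have hlimsup : symmDiff (Q j) (⋃ K, ⋂ t, ⋂ (_ : K ≤ t), E t) ⊆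
          limsup (fun t => symmDiff (Q j) (E t)) atTop := by
        rw [limsup_eq_iInf_iSup_of_nat]
        intro x hx
        rw [Set.mem_symmDiff] at hx
        simp only [iInf_eq_iInter, iSup_eq_iUnion, mem_iInter, mem_iUnion]
        rcases hx with ⟨hx1, hx2⟩ | ⟨hx1, hx2⟩
        · intro K
          simp only [mem_iUnion, mem_iInter, not_exists, not_forall] at hx2
          obtain ⟨t, hKt, hxt⟩ := hx2 K
          exact ⟨t, hKt, Set.mem_symmDiff.2 (Or.inl ⟨hx1, hxt⟩)⟩
        · intro K
          obtain ⟨K0, hK0⟩ := mem_iUnion.1 hx1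
          simp only [mem_iInter] at hK0
          refine ⟨max K K0, le_max_left _ _, Set.mem_symmDiff.2
            (Or.inr ⟨hK0 _ (le_max_right _ _), hx2⟩)⟩
      refine le_antisymm ?_ zero_le
      calc μ (symmDiff (Q j) (⋃ K, ⋂ t, ⋂ (_ : K ≤ t), E t))
          ≤ μ (limsup (fun t => symmDiff (Q j) (E t)) atTop) := measure_mono hlimsup
        _ = 0 := by
            apply measure_limsup_atTop_eq_zero
            refine ne_top_of_le_ne_top ?_ (ENNReal.tsum_le_tsum fun t => (hf t).le)
            rw [ENNReal.tsum_geometric, Ne, ENNReal.inv_eq_top, tsub_eq_zero_iff_le]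
            norm_num
end

section
/- For irrational α, β ∈ [0,1): if α and β are rationally dependent (i.e., there exist nonzero integers m, n with mα ≡ nβ (mod 1)), then the circle rotations T_α and T_β have a common nontrivial factor, namely the rotation T_γ with γ = mα mod 1, which is irrational. -/
open MeasureTheory

/-- If irrational `α, β` are rationally dependent (`mα ≡ nβ (mod 1)` with `m, n` nonzero
integers), then the rotations `T_α` and `T_β` of the circle have a common nontrivial
factor, namely rotation by `γ = mα (mod 1)`, which is irrational: there are
measure-preserving maps intertwining `T_α` (resp. `T_β`) with `T_γ`. -/
theorem stmt14 (α β : ℝ) (hα : Irrational α) (hβ : Irrational β)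
    (m n : ℤ) (hm : m ≠ 0) (hn : n ≠ 0)
    (hdep : ∃ k : ℤ, (m : ℝ) * α - (n : ℝ) * β = (k : ℝ)) :
    Irrational ((m : ℝ) * α) ∧
    ∃ φ ψ : UnitAddCircle → UnitAddCircle,
      Measurable φ ∧ Measurable ψ ∧
      MeasurePreserving φ volume volume ∧
      MeasurePreserving ψ volume volume ∧
      (∀ x : UnitAddCircle, φ (x + (α : UnitAddCircle)) =
        φ x + (((m : ℝ) * α : ℝ) : UnitAddCircle)) ∧
      (∀ x : UnitAddCircle, ψ (x + (β : UnitAddCircle)) =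
        ψ x + (((m : ℝ) * α : ℝ) : UnitAddCircle)) := by
  obtain ⟨k, hk⟩ := hdep
  have hcoe : ∀ (j : ℤ) (r : ℝ), (j : ℤ) • ((r : UnitAddCircle)) = (((j : ℝ) * r : ℝ) : UnitAddCircle) := by
    intro j r
    rw [← AddCircle.coe_zsmul]
    rw [zsmul_eq_mul]
  have hmp : MeasurePreserving (fun x : UnitAddCircle => m • x) volume volume :=
    Measure.measurePreserving_zsmul volume hm
  have hnp : MeasurePreserving (fun x : UnitAddCircle => n • x) volume volume :=
    Measure.measurePreserving_zsmul volume hn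
  refine ⟨hα.intCast_mul hm, fun x => m • x, fun x => n • x, hmp.measurable, hnp.measurable,
    hmp, hnp, fun x => ?_, fun x => ?_⟩ <;> simp only []
  · rw [smul_add, hcoe]
  · rw [smul_add, hcoe]
    congr 1
    have : ((n : ℝ) * β : ℝ) = (m : ℝ) * α - (k : ℝ) := by linarith
    rw [this]
    simp [AddCircle.coe_sub]
end
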